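/- For every μ ≥ 0, the advantage of the Gaussian trade-off curve equals the total variation of the μ-GDP Gaussian pair: sup_{α ∈ [0,1]} (1 − α − f_μ(α)) = Φ(μ/2) − Φ(−μ/2) = 2Φ(μ/2) − 1. -/

import Mathlib

/-!
Writing `1 - α = Φ x`, the quantity `1 - α - f_μ(α)` is the standard normal mass of the window
`[x - μ, x]`. Since the Gaussian density decreases in `|t|`, a window of fixed length carries the
most mass when it is centred at `0`; the centred window `[-μ/2, μ/2]` corresponds to
`α = Φ(-μ/2)`, and `Φ(-x) = 1 - Φ x` gives the second form of the value.
-/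

/-- The standard normal CDF `Φ`. -/
noncomputable def stdGaussianCDF (x : ℝ) : ℝ :=
  ∫ t in Set.Iic x, Real.exp (-(t ^ 2) / 2) / Real.sqrt (2 * Real.pi)

/-- The standard normal quantile function `Φ⁻¹`. -/
noncomputable def stdGaussianQuantile : ℝ → ℝ :=
  Function.invFun stdGaussianCDF

/-- The Gaussian trade-off curve `f_μ`, with `f_μ(α) = Φ(Φ⁻¹(1-α) - μ)` on `(0,1)`,
`f_μ(0) = 1` and `f_μ(1) = 0`. -/
noncomputable def gdpCurve (μ α : ℝ) : ℝ :=
  if α ≤ 0 then 1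
  else if 1 ≤ α then 0
  else stdGaussianCDF (stdGaussianQuantile (1 - α) - μ)

open MeasureTheory ProbabilityTheory Set

theorem intervalIntegral_window_le_centered {f : ℝ → ℝ} (hf : Integrable f)
    (hf_anti : ∀ ⦃s t : ℝ⦄, |s| ≤ |t| → f t ≤ f s) {μ : ℝ} (hμ : 0 ≤ μ) (x : ℝ) :
    ∫ t in (x - μ)..x, f t ≤ ∫ t in (-(μ / 2))..(μ / 2), f t := by
  have hfi : ∀ a b, IntervalIntegrable f volume a b := fun _ _ => hf.intervalIntegrable
  have hfμ : ∀ a b, IntervalIntegrable (fun t => f (t - μ)) volume a b :=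
    fun _ _ => (hf.comp_sub_right μ).intervalIntegrable
  have hshift : ∀ a b, ∫ t in a..b, f (t - μ) = ∫ t in (a - μ)..(b - μ), f t :=
    fun a b => intervalIntegral.integral_comp_sub_right f μ
  have hμ2 : μ / 2 - μ = -(μ / 2) := by ring
  -- Translating by `μ` the part of one window sticking out of the other moves it away from `0`.
  rcases le_total x (μ / 2) with hx | hx
  · have key : ∫ t in x..(μ / 2), f (t - μ) ≤ ∫ t in x..(μ / 2), f t :=
      intervalIntegral.integral_mono_on hx (hfμ _ _) (hfi _ _) fun t ht =>
        hf_anti (sq_le_sq.mp (by nlinarith [ht.2]))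
    rw [hshift, hμ2] at key
    have := intervalIntegral.integral_add_adjacent_intervals (hfi (x - μ) (-(μ / 2))) (hfi _ x)
    have := intervalIntegral.integral_add_adjacent_intervals (hfi (-(μ / 2)) x) (hfi _ (μ / 2))
    linarith
  · have key : ∫ t in (μ / 2)..x, f t ≤ ∫ t in (μ / 2)..x, f (t - μ) :=
      intervalIntegral.integral_mono_on hx (hfi _ _) (hfμ _ _) fun t ht =>
        hf_anti (sq_le_sq.mp (by nlinarith [ht.1]))
    rw [hshift, hμ2] at key
    have := intervalIntegral.integral_add_adjacent_intervals (hfi (-(μ / 2)) (x - μ)) (hfi _ x)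
    have := intervalIntegral.integral_add_adjacent_intervals (hfi (-(μ / 2)) (μ / 2)) (hfi _ x)
    linarith

lemma gaussianPDFReal_zero_le_of_abs_le (v : NNReal) ⦃s t : ℝ⦄ (h : |s| ≤ |t|) :
    gaussianPDFReal 0 v t ≤ gaussianPDFReal 0 v s := by
  simp only [gaussianPDFReal, sub_zero]
  have := sq_le_sq.mpr h
  gcongr

local notation "φ" => gaussianPDFReal 0 1

lemma stdGaussianCDF_eq_setIntegral (x : ℝ) : stdGaussianCDF x = ∫ t in Iic x, φ t := by
  unfold stdGaussianCDF
  congr 1 with t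
  simp [gaussianPDFReal, div_eq_inv_mul]

lemma stdGaussianCDF_eq_cdf : stdGaussianCDF = cdf (gaussianReal 0 1) := by
  ext x
  rw [cdf_eq_real, measureReal_def, gaussianReal_apply_eq_integral _ one_ne_zero,
    ENNReal.toReal_ofReal (setIntegral_nonneg measurableSet_Iic fun t _ =>
      gaussianPDFReal_nonneg 0 1 t), stdGaussianCDF_eq_setIntegral]

lemma stdGaussianCDF_sub (a b : ℝ) : stdGaussianCDF b - stdGaussianCDF a = ∫ t in a..b, φ t := by
  rw [stdGaussianCDF_eq_setIntegral, stdGaussianCDF_eq_setIntegral]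
  exact intervalIntegral.integral_Iic_sub_Iic (integrable_gaussianPDFReal 0 1).integrableOn
    (integrable_gaussianPDFReal 0 1).integrableOn

lemma strictMono_stdGaussianCDF : StrictMono stdGaussianCDF := fun a b hab => by
  have := intervalIntegral.intervalIntegral_pos_of_pos
    (integrable_gaussianPDFReal 0 1).intervalIntegrable
    (fun t => gaussianPDFReal_pos 0 1 t one_ne_zero) hab
  linarith [stdGaussianCDF_sub a b]

lemma continuous_stdGaussianCDF : Continuous stdGaussianCDF := by
  have hprim : stdGaussianCDF = fun b => stdGaussianCDF 0 + ∫ t in (0 : ℝ)..b, φ t := by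
    ext b
    linarith [stdGaussianCDF_sub 0 b]
  rw [hprim]
  exact continuous_const.add ((integrable_gaussianPDFReal 0 1).continuous_primitive 0)

lemma stdGaussianCDF_pos (x : ℝ) : 0 < stdGaussianCDF x := by
  have := strictMono_stdGaussianCDF (sub_one_lt x)
  linarith [stdGaussianCDF_eq_cdf ▸ cdf_nonneg (gaussianReal 0 1) (x - 1)]

lemma stdGaussianCDF_lt_one (x : ℝ) : stdGaussianCDF x < 1 := by
  have := strictMono_stdGaussianCDF (lt_add_one x)
  linarith [stdGaussianCDF_eq_cdf ▸ cdf_le_one (gaussianReal 0 1) (x + 1)]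

lemma stdGaussianCDF_neg (x : ℝ) : stdGaussianCDF (-x) = 1 - stdGaussianCDF x := by
  have hIoi : stdGaussianCDF (-x) = ∫ t in Ioi x, φ t := by
    rw [stdGaussianCDF_eq_setIntegral, ← neg_neg x, ← integral_comp_neg_Iic, neg_neg]
    simp [gaussianPDFReal]
  have htotal : stdGaussianCDF x + ∫ t in Ioi x, φ t = 1 := by
    rw [stdGaussianCDF_eq_setIntegral, intervalIntegral.integral_Iic_add_Ioi
      (integrable_gaussianPDFReal 0 1).integrableOn (integrable_gaussianPDFReal 0 1).integrableOn,
      integral_gaussianPDFReal_eq_one 0 one_ne_zero]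
  linarith

lemma Ioo_subset_range_stdGaussianCDF : Ioo 0 1 ⊆ range stdGaussianCDF := by
  rintro y ⟨hy0, hy1⟩
  have hbot := stdGaussianCDF_eq_cdf ▸ tendsto_cdf_atBot (gaussianReal 0 1)
  have htop := stdGaussianCDF_eq_cdf ▸ tendsto_cdf_atTop (gaussianReal 0 1)
  obtain ⟨a, ha⟩ := (hbot.eventually_lt_const hy0).exists
  obtain ⟨b, hb⟩ := (htop.eventually_const_lt hy1).exists
  exact intermediate_value_univ a b continuous_stdGaussianCDF ⟨ha.le, hb.le⟩

lemma stdGaussianQuantile_stdGaussianCDF (x : ℝ) :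
    stdGaussianQuantile (stdGaussianCDF x) = x :=
  Function.leftInverse_invFun strictMono_stdGaussianCDF.injective x

lemma gdpCurve_one_sub_stdGaussianCDF (μ x : ℝ) :
    gdpCurve μ (1 - stdGaussianCDF x) = stdGaussianCDF (x - μ) := by
  have h0 : ¬ 1 - stdGaussianCDF x ≤ 0 := by linarith [stdGaussianCDF_lt_one x]
  have h1 : ¬ 1 ≤ 1 - stdGaussianCDF x := by linarith [stdGaussianCDF_pos x]
  rw [gdpCurve, if_neg h0, if_neg h1, sub_sub_cancel, stdGaussianQuantile_stdGaussianCDF]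

lemma stdGaussianCDF_sub_le_centered {μ : ℝ} (hμ : 0 ≤ μ) (x : ℝ) :
    stdGaussianCDF x - stdGaussianCDF (x - μ) ≤
      stdGaussianCDF (μ / 2) - stdGaussianCDF (-(μ / 2)) := by
  rw [stdGaussianCDF_sub, stdGaussianCDF_sub]
  exact intervalIntegral_window_le_centered (integrable_gaussianPDFReal 0 1)
    (gaussianPDFReal_zero_le_of_abs_le 1) hμ x

lemma one_sub_sub_gdpCurve_le {μ : ℝ} (hμ : 0 ≤ μ) {α : ℝ} (hα : α ∈ Icc 0 1) :
    1 - α - gdpCurve μ α ≤ stdGaussianCDF (μ / 2) - stdGaussianCDF (-(μ / 2)) := by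
  have hTV : 0 ≤ stdGaussianCDF (μ / 2) - stdGaussianCDF (-(μ / 2)) :=
    sub_nonneg.2 (strictMono_stdGaussianCDF.monotone (by linarith))
  rcases hα.1.eq_or_lt with rfl | h0
  · simpa [gdpCurve] using hTV
  rcases hα.2.eq_or_lt with rfl | h1
  · norm_num [gdpCurve] at hTV ⊢
    exact hTV
  obtain ⟨x, hx⟩ := Ioo_subset_range_stdGaussianCDF ⟨sub_pos.2 h1, by linarith⟩
  obtain rfl : α = 1 - stdGaussianCDF x := by linarith
  rw [gdpCurve_one_sub_stdGaussianCDF, sub_sub_cancel]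
  exact stdGaussianCDF_sub_le_centered hμ x

/-- For every `μ ≥ 0`, the advantage of the Gaussian trade-off curve equals the
total variation of the `μ`-GDP Gaussian pair:
`sup_{α ∈ [0,1]} (1 - α - f_μ(α)) = Φ(μ/2) - Φ(-μ/2) = 2Φ(μ/2) - 1`. -/
theorem adv_gdpCurve_eq (μ : ℝ) (hμ : 0 ≤ μ) :
    sSup ((fun α => 1 - α - gdpCurve μ α) '' Set.Icc (0:ℝ) 1) =
      stdGaussianCDF (μ / 2) - stdGaussianCDF (-(μ / 2)) ∧
    stdGaussianCDF (μ / 2) - stdGaussianCDF (-(μ / 2)) =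
      2 * stdGaussianCDF (μ / 2) - 1 := by
  have hsymm := stdGaussianCDF_neg (μ / 2)
  refine ⟨IsGreatest.csSup_eq ⟨?_, ?_⟩, by linarith⟩
  · refine ⟨1 - stdGaussianCDF (μ / 2), ⟨?_, ?_⟩, ?_⟩
    · linarith [stdGaussianCDF_lt_one (μ / 2)]
    · linarith [stdGaussianCDF_pos (μ / 2)]
    · dsimp only
      rw [gdpCurve_one_sub_stdGaussianCDF, sub_sub_cancel, show μ / 2 - μ = -(μ / 2) by ring]
  · rintro _ ⟨α, hα, rfl⟩
    exact one_sub_sub_gdpCurve_le hμ hα
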